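/- arXiv:0908.3850 — 2 statements merged into one kernel-verified Lean document; each statement's English description precedes it below -/
import Mathlib

section
/- Let G = (V,E) be a finite simple graph. For all real numbers β and γ: Σ_{s ⊆ E} β^{|s|} · Π_{i ∈ V} f_{deg_s(i)}(γ) = Σ_{s ⊆ E} β^{|s|} · (1-β)^{|E|-|s|} · Π_{K} g_{n(K)}(γ), where the product is over the connected components K of the spanning subgraph (V,s), n(K) is the nullity of K, and g_m(γ) := Σ_{k=0}^{m} C(m,k)·f_{2k}(γ). -/
open Polynomial

attribute [local instance] Classical.propDecidable

/-- The polynomials `f₀ = 1`, `f₁ = 0`, `f_{n+1}(x) = x·f_n(x) + f_{n-1}(x)`. -/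
noncomputable def isingF : ℕ → Polynomial ℤ
  | 0 => 1
  | 1 => 0
  | n + 2 => X * isingF (n + 1) + isingF n

/-- The degree of vertex `i` in the spanning subgraph `(V, s)`. -/
noncomputable def degIn {V : Type*} (s : Finset (Sym2 V)) (i : V) : ℕ :=
  (s.filter (fun e => i ∈ e)).card

/-- The spanning subgraph `(V, s)` determined by an edge set `s`. -/
noncomputable def subSpan {V : Type*} (s : Finset (Sym2 V)) : SimpleGraph V :=
  SimpleGraph.fromEdgeSet ↑s

/-- Number of edges of `s` lying in the connected component `K` of `(V, s)`. -/
noncomputable def compEdges {V : Type*} (s : Finset (Sym2 V))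
    (K : (subSpan s).ConnectedComponent) : ℕ :=
  (s.filter (fun e => ∀ v ∈ e, (subSpan s).connectedComponentMk v = K)).card

/-- Number of vertices in the connected component `K` of `(V, s)`. -/
noncomputable def compVerts {V : Type*} (s : Finset (Sym2 V))
    (K : (subSpan s).ConnectedComponent) : ℕ :=
  Nat.card {v : V // (subSpan s).connectedComponentMk v = K}

/-- Nullity (#edges − #vertices + 1) of the connected component `K` of `(V, s)`. -/
noncomputable def compNullity {V : Type*} (s : Finset (Sym2 V))
    (K : (subSpan s).ConnectedComponent) : ℕ :=
  compEdges s K + 1 - compVerts s K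


/-!
By Binet's formula `f_n(γ) = ∑_b w_b λ_b ^ n`, where `λ_b` runs over the two roots `ρ, -ρ⁻¹` of
`λ² = γλ + 1` and `w_b = (1 + λ_b²)⁻¹`. Expanding `∏_i f_{deg_t i}(γ)` gives a sum over spin
configurations `σ : V → Bool` of `∏_i w_{σ i} ∏_{uv ∈ t} λ_{σ u} λ_{σ v}`, and summing over `t ⊆ s`
turns the edge weights into factors `1 + λ_{σ u} λ_{σ v}`. Since `λ₊ λ₋ = -1` these vanish across
any edge where `σ` changes, so only configurations constant on the components of `(V, s)` survive.
A component with `v` vertices and `m` edges then contributes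
`∑_b w_b ^ v (1 + λ_b²) ^ m = ∑_b w_b (1 + λ_b²) ^ n`, `n = m + 1 - v` its nullity, because
`w_b (1 + λ_b²) = 1`; the binomial theorem turns this into `∑_k C(n, k) f_{2k}(γ)`. Finally,
`∑_{T ⊆ S ⊆ E} β ^ |S| (1 - β) ^ (|E| - |S|) = β ^ |T|` converts the sum over `t` into the
weighted sum over `s`.
-/

open Finset

theorem aeval_isingF_eq_sum_pow {R S : Type*} [CommRing R] [Fintype S] (γ : R) (w r : S → R)
    (hr : ∀ a, r a ^ 2 = γ * r a + 1) (hw : ∑ a, w a = 1) (hwr : ∑ a, w a * r a = 0) (n : ℕ) :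
    aeval γ (isingF n) = ∑ a, w a * r a ^ n := by
  induction n using Nat.twoStepInduction with
  | zero => simp [isingF, hw]
  | one => simp [isingF, hwr]
  | more n ih₀ ih₁ =>
    simp only [isingF, map_add, map_mul, aeval_X, ih₀, ih₁, mul_sum, ← sum_add_distrib]
    refine sum_congr rfl fun a _ => ?_
    linear_combination (-(w a * r a ^ n)) * hr a

theorem sum_pow_mul_one_add_sq_pow {R S : Type*} [CommRing R] [Fintype S] (w r : S → R)
    (hwr : ∀ a, w a * (1 + r a ^ 2) = 1) {v e : ℕ} (hv : 1 ≤ v) (hve : v ≤ e + 1) :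
    ∑ a, w a ^ v * (1 + r a ^ 2) ^ e
      = ∑ k ∈ range (e + 1 - v + 1), ((e + 1 - v).choose k : R) * ∑ a, w a * r a ^ (2 * k) := by
  obtain ⟨m, rfl⟩ : ∃ m, v = m + 1 := ⟨v - 1, by omega⟩
  obtain ⟨n, rfl⟩ : ∃ n, e = m + n := ⟨e - m, by omega⟩
  rw [show m + n + 1 - (m + 1) = n by omega]
  calc ∑ a, w a ^ (m + 1) * (1 + r a ^ 2) ^ (m + n)
      = ∑ a, (w a * (1 + r a ^ 2)) ^ m * (w a * (1 + r a ^ 2) ^ n) :=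
        sum_congr rfl fun a _ => by rw [mul_pow]; ring
    _ = ∑ a, ∑ k ∈ range (n + 1), (n.choose k : R) * (w a * r a ^ (2 * k)) := by
        refine sum_congr rfl fun a _ => ?_
        rw [hwr, one_pow, one_mul, add_comm, add_pow, mul_sum]
        refine sum_congr rfl fun k _ => ?_
        rw [pow_mul]
        ring
    _ = _ := by rw [sum_comm]; simp only [mul_sum]

/-- `ρ` and `-ρ⁻¹`: if `ρ` is a root of `X ^ 2 - γ X - 1`, these are both of its roots. -/
def isingRoots {F : Type*} [Field F] (ρ : F) (b : Bool) : F := bif b then ρ else -ρ⁻¹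

section isingRoots

variable {F : Type*} [Field F] {γ ρ : F}

theorem ne_zero_of_sq_eq_mul_add_one (hρ : ρ ^ 2 = γ * ρ + 1) : ρ ≠ 0 := by
  rintro rfl
  simp at hρ

theorem isingRoots_sq (hρ : ρ ^ 2 = γ * ρ + 1) (b : Bool) :
    isingRoots ρ b ^ 2 = γ * isingRoots ρ b + 1 := by
  have := ne_zero_of_sq_eq_mul_add_one hρ
  cases b
  · simp only [isingRoots, cond_false]
    field_simp
    linear_combination -hρ
  · exact hρ

theorem one_add_isingRoots_mul_of_ne (hρ : ρ ^ 2 = γ * ρ + 1) {a b : Bool} (hab : a ≠ b) :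
    1 + isingRoots ρ a * isingRoots ρ b = 0 := by
  have := ne_zero_of_sq_eq_mul_add_one hρ
  cases a <;> cases b <;> simp_all [isingRoots]

theorem one_add_isingRoots_sq_ne_zero (hρ : ρ ^ 2 = γ * ρ + 1) (hρ' : 1 + ρ ^ 2 ≠ 0)
    (b : Bool) :
    1 + isingRoots ρ b ^ 2 ≠ 0 := by
  have := ne_zero_of_sq_eq_mul_add_one hρ
  cases b
  · simp only [isingRoots, cond_false]
    field_simp
    exact div_ne_zero (by rwa [add_comm]) (pow_ne_zero 2 this)
  · exact hρ'

theorem one_add_isingRoots_false_sq (hρ : ρ ^ 2 = γ * ρ + 1) :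
    1 + isingRoots ρ false ^ 2 = (1 + ρ ^ 2) / ρ ^ 2 := by
  have := ne_zero_of_sq_eq_mul_add_one hρ
  simp only [isingRoots, cond_false]
  field_simp
  ring

theorem sum_inv_one_add_isingRoots_sq (hρ : ρ ^ 2 = γ * ρ + 1) (hρ' : 1 + ρ ^ 2 ≠ 0) :
    ∑ b, (1 + isingRoots ρ b ^ 2)⁻¹ = 1 := by
  have := ne_zero_of_sq_eq_mul_add_one hρ
  rw [Fintype.sum_bool, one_add_isingRoots_false_sq hρ]
  simp only [isingRoots, cond_true]
  field_simp

theorem sum_inv_one_add_isingRoots_sq_mul (hρ : ρ ^ 2 = γ * ρ + 1) (hρ' : 1 + ρ ^ 2 ≠ 0) :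
    ∑ b, (1 + isingRoots ρ b ^ 2)⁻¹ * isingRoots ρ b = 0 := by
  have := ne_zero_of_sq_eq_mul_add_one hρ
  rw [Fintype.sum_bool, one_add_isingRoots_false_sq hρ]
  simp only [isingRoots, cond_true, cond_false]
  field_simp
  ring

end isingRoots

section Graph

variable {V : Type*}

theorem prod_pow_degIn [Fintype V] [DecidableEq V] {M : Type*} [CommMonoid M] (x : V → M)
    (t : Finset (Sym2 V)) :
    ∏ i, x i ^ degIn t i = ∏ e ∈ t, ∏ i ∈ e.toFinset, x i := by
  calc ∏ i, x i ^ degIn t i = ∏ i, ∏ e ∈ t with i ∈ e, x i := by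
        simp only [degIn, prod_const]
        -- the filter in `degIn` uses classical decidability
        congr!
    _ = ∏ e ∈ t, ∏ i with i ∈ e, x i := prod_comm' (by simp [and_comm])
    _ = _ := prod_congr rfl fun e _ => by congr 1; ext; simp

theorem sum_powerset_prod_sum_pow_degIn [Fintype V] [DecidableEq V] {R S : Type*} [CommRing R]
    [Fintype S] (w r : S → R) (s : Finset (Sym2 V)) :
    ∑ t ∈ s.powerset, ∏ i, ∑ a, w a * r a ^ degIn t i
      = ∑ σ : V → S, (∏ i, w (σ i)) * ∏ e ∈ s, (1 + ∏ i ∈ e.toFinset, r (σ i)) := by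
  simp_rw [Fintype.prod_sum]
  rw [sum_comm]
  refine sum_congr rfl fun σ _ => ?_
  simp_rw [prod_mul_distrib, prod_pow_degIn (fun i => r (σ i)), ← mul_sum, prod_one_add]

theorem connectedComponentMk_subSpan_eq_of_mem {s : Finset (Sym2 V)} {e : Sym2 V} (he : e ∈ s)
    {u v : V} (hu : u ∈ e) (hv : v ∈ e) :
    (subSpan s).connectedComponentMk u = (subSpan s).connectedComponentMk v := by
  by_cases huv : u = v
  · rw [huv]
  · refine SimpleGraph.ConnectedComponent.connectedComponentMk_eq_of_adj ?_
    rw [subSpan, SimpleGraph.fromEdgeSet_adj, ← (Sym2.mem_and_mem_iff huv).1 ⟨hu, hv⟩]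
    exact ⟨he, huv⟩

theorem prod_one_add_prod_toFinset_eq_zero [DecidableEq V] {R S : Type*} [CommRing R] (r : S → R)
    (hr : ∀ a b, a ≠ b → 1 + r a * r b = 0) {s : Finset (Sym2 V)} {σ : V → S} {u v : V}
    (huv : (subSpan s).Reachable u v) (hσ : σ u ≠ σ v) :
    ∏ e ∈ s, (1 + ∏ i ∈ e.toFinset, r (σ i)) = 0 := by
  obtain ⟨d, -, hd₁, hd₂⟩ := huv.some.exists_boundary_dart {x | σ x = σ u} rfl hσ.symm
  have hd : s(d.fst, d.snd) ∈ s ∧ d.fst ≠ d.snd := by simpa [subSpan] using d.adj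
  refine prod_eq_zero hd.1 ?_
  rw [Sym2.toFinset_mk_eq, prod_pair hd.2]
  exact hr _ _ fun h => hd₂ (h.symm.trans hd₁)

theorem prod_connectedComponentMk_subSpan [Fintype V] [DecidableEq V] {M : Type*} [CommMonoid M]
    (s : Finset (Sym2 V)) (φ : (subSpan s).ConnectedComponent → M) :
    ∏ i, φ ((subSpan s).connectedComponentMk i) = ∏ K, φ K ^ compVerts s K := by
  rw [← Fintype.prod_fiberwise (subSpan s).connectedComponentMk]
  refine prod_congr rfl fun K _ => ?_
  rw [prod_congr rfl fun i _ => congrArg φ i.2, prod_const, card_univ, compVerts,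
    Nat.card_eq_fintype_card]

theorem prod_eq_prod_compEdges [Fintype V] [DecidableEq V] {M : Type*} [CommMonoid M]
    (s : Finset (Sym2 V)) (ψ : Sym2 V → M) :
    ∏ e ∈ s, ψ e
      = ∏ K, ∏ e ∈ s with ∀ v ∈ e, (subSpan s).connectedComponentMk v = K, ψ e := by
  rw [prod_comm' (t' := s) (s' := fun e => univ.filter fun K =>
    ∀ v ∈ e, (subSpan s).connectedComponentMk v = K) (by simp [and_comm])]
  refine prod_congr rfl fun e he => ?_
  obtain ⟨u, hu⟩ : ∃ u, u ∈ e := Sym2.ind (fun a b => ⟨a, Sym2.mem_mk_left a b⟩) e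
  rw [show (univ.filter fun K => ∀ v ∈ e, (subSpan s).connectedComponentMk v = K)
      = {(subSpan s).connectedComponentMk u} by
    ext K
    simp only [mem_filter, mem_univ, true_and, mem_singleton]
    exact ⟨fun h => (h u hu).symm, fun h v hv =>
      h ▸ connectedComponentMk_subSpan_eq_of_mem he hv hu⟩, prod_singleton]

theorem one_le_compVerts [Fintype V] (s : Finset (Sym2 V))
    (K : (subSpan s).ConnectedComponent) :
    1 ≤ compVerts s K :=
  Nat.one_le_iff_ne_zero.2 <| Nat.card_ne_zero.2 ⟨⟨⟨K.out, K.out_eq⟩⟩, inferInstance⟩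

theorem compVerts_le_compEdges_add_one [Fintype V] (s : Finset (Sym2 V))
    (K : (subSpan s).ConnectedComponent) : compVerts s K ≤ compEdges s K + 1 := by
  refine K.connected_toSimpleGraph.card_vert_le_card_edgeSet_add_one.trans
    (Nat.add_le_add_right ?_ 1)
  rw [compEdges, ← Nat.card_eq_finsetCard]
  refine Nat.card_le_card_of_injective
    (fun e => ⟨Sym2.map Subtype.val e.1, ?_⟩) fun e₁ e₂ h => ?_
  · obtain ⟨e, he⟩ := e
    induction e using Sym2.ind with
    | h a b =>
      have hab : (subSpan s).Adj a b := he
      have hs : s(a.1, b.1) ∈ s ∧ a.1 ≠ b.1 := by simpa [subSpan] using hab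
      simp only [Sym2.map_mk, mem_filter, Sym2.mem_iff, forall_eq_or_imp, forall_eq]
      exact ⟨hs.1, a.2, b.2⟩
  · exact Sym2.map.injective Subtype.val_injective (congrArg Subtype.val h) |> Subtype.ext

end Graph

theorem sum_powerset_prod_sum_pow_degIn_eq_prod {V R S : Type*} [Fintype V] [DecidableEq V]
    [CommRing R] [Fintype S] (w r : S → R) (hr : ∀ a b, a ≠ b → 1 + r a * r b = 0)
    (s : Finset (Sym2 V)) (hs : ∀ e ∈ s, ¬ e.IsDiag) :
    ∑ t ∈ s.powerset, ∏ i, ∑ a, w a * r a ^ degIn t i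
      = ∏ K, ∑ a, w a ^ compVerts s K * (1 + r a ^ 2) ^ compEdges s K := by
  rw [sum_powerset_prod_sum_pow_degIn, Fintype.prod_sum]
  refine (Fintype.sum_of_injective (fun τ => τ ∘ (subSpan s).connectedComponentMk)
    (Function.Surjective.injective_comp_right fun K => ⟨K.out, K.out_eq⟩)
    _ _ ?_ fun τ => ?_).symm
  · intro σ hσ
    obtain ⟨u, v, huv, hne⟩ : ∃ u v, (subSpan s).Reachable u v ∧ σ u ≠ σ v := by
      by_contra! h
      exact hσ ⟨fun K => σ K.out, funext fun v => h _ _ (SimpleGraph.ConnectedComponent.exact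
        ((subSpan s).connectedComponentMk v).out_eq)⟩
    rw [prod_one_add_prod_toFinset_eq_zero r hr huv hne, mul_zero]
  · have hedge : ∀ K, ∀ e ∈ s.filter fun e => ∀ v ∈ e, (subSpan s).connectedComponentMk v = K,
        1 + ∏ i ∈ e.toFinset, r (τ ((subSpan s).connectedComponentMk i)) = 1 + r (τ K) ^ 2 := by
      intro K e he
      rw [mem_filter] at he
      rw [prod_congr rfl fun i hi => by rw [he.2 i (Sym2.mem_toFinset.1 hi)], prod_const,
        Sym2.card_toFinset_of_not_isDiag e (hs e he.1)]
    simp only [Function.comp_apply]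
    rw [prod_connectedComponentMk_subSpan s fun K => w (τ K), prod_eq_prod_compEdges s,
      ← prod_mul_distrib]
    refine prod_congr rfl fun K _ => ?_
    rw [prod_congr rfl (hedge K), prod_const, compEdges]
    congr!

theorem sum_powerset_prod_aeval_isingF {V F : Type*} [Fintype V] [DecidableEq V] [Field F]
    {γ ρ : F} (hρ : ρ ^ 2 = γ * ρ + 1) (hρ' : 1 + ρ ^ 2 ≠ 0)
    (s : Finset (Sym2 V)) (hs : ∀ e ∈ s, ¬ e.IsDiag) :
    ∑ t ∈ s.powerset, ∏ i, aeval γ (isingF (degIn t i))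
      = ∏ᶠ K : (subSpan s).ConnectedComponent,
          ∑ k ∈ range (compNullity s K + 1),
            ((compNullity s K).choose k : F) * aeval γ (isingF (2 * k)) := by
  simp_rw [aeval_isingF_eq_sum_pow γ (fun b => (1 + isingRoots ρ b ^ 2)⁻¹) (isingRoots ρ)
    (isingRoots_sq hρ) (sum_inv_one_add_isingRoots_sq hρ hρ')
    (sum_inv_one_add_isingRoots_sq_mul hρ hρ')]
  rw [sum_powerset_prod_sum_pow_degIn_eq_prod _ _ (fun _ _ => one_add_isingRoots_mul_of_ne hρ) s hs,
    finprod_eq_prod_of_fintype]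
  refine prod_congr rfl fun K _ => ?_
  exact sum_pow_mul_one_add_sq_pow _ _
    (fun b => inv_mul_cancel₀ (one_add_isingRoots_sq_ne_zero hρ hρ' b))
    (one_le_compVerts s K) (compVerts_le_compEdges_add_one s K)

theorem sum_Icc_pow_mul_one_sub_pow {ι R : Type*} [DecidableEq ι] [CommRing R]
    {T E : Finset ι} (hT : T ⊆ E) (β : R) :
    ∑ S ∈ Icc T E, β ^ #S * (1 - β) ^ (#E - #S) = β ^ #T := by
  have hdisj : ∀ U ∈ (E \ T).powerset, Disjoint T U := fun U hU =>
    disjoint_of_subset_right (mem_powerset.1 hU) disjoint_sdiff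
  rw [Icc_eq_image_powerset hT, sum_image fun U hU U' hU' h => by
    rw [← union_sdiff_cancel_left (hdisj U hU), h, union_sdiff_cancel_left (hdisj U' hU')]]
  calc ∑ U ∈ (E \ T).powerset, β ^ #(T ∪ U) * (1 - β) ^ (#E - #(T ∪ U))
      = ∑ U ∈ (E \ T).powerset, β ^ #T * (β ^ #U * (1 - β) ^ (#(E \ T) - #U)) := by
        refine sum_congr rfl fun U hU => ?_
        rw [card_union_of_disjoint (hdisj U hU), card_sdiff_of_subset hT, pow_add,
          Nat.sub_add_eq, mul_assoc]
    _ = β ^ #T := by rw [← mul_sum, sum_pow_mul_eq_add_pow, add_sub_cancel, one_pow, mul_one]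

theorem sum_powerset_pow_mul_eq_sum_powerset_pow_mul_one_sub_pow {ι R : Type*} [DecidableEq ι]
    [CommRing R] (E : Finset ι) (β : R) (f : Finset ι → R) :
    ∑ T ∈ E.powerset, β ^ #T * f T
      = ∑ S ∈ E.powerset, β ^ #S * (1 - β) ^ (#E - #S) * ∑ T ∈ S.powerset, f T := by
  simp_rw [mul_sum]
  rw [sum_comm' (t' := E.powerset) (s' := fun T => Icc T E) (by
    intro S T
    simp only [mem_powerset, mem_Icc]
    exact ⟨fun h => ⟨⟨h.2, h.1⟩, h.2.trans h.1⟩, fun h => ⟨h.1.2, h.1.1⟩⟩)]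
  refine sum_congr rfl fun T hT => ?_
  rw [← sum_mul, sum_Icc_pow_mul_one_sub_pow (mem_powerset.1 hT)]

theorem theta_component_expansion_general {V : Type*} [Fintype V]
    (G : SimpleGraph V) [DecidableRel G.Adj] (β γ : ℝ) :
    ∑ s ∈ G.edgeFinset.powerset,
        β ^ s.card * ∏ i : V, Polynomial.aeval γ (isingF (degIn s i))
      = ∑ s ∈ G.edgeFinset.powerset,
          β ^ s.card * (1 - β) ^ (G.edgeFinset.card - s.card) *
            ∏ᶠ K : (subSpan s).ConnectedComponent,
              ∑ k ∈ Finset.range (compNullity s K + 1),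
                ((compNullity s K).choose k : ℝ) * Polynomial.aeval γ (isingF (2 * k)) := by
  obtain ⟨ρ, hρ⟩ : ∃ ρ : ℝ, ρ ^ 2 = γ * ρ + 1 := by
    refine ⟨(γ + √(γ ^ 2 + 4)) / 2, ?_⟩
    have := Real.sq_sqrt (by positivity : (0 : ℝ) ≤ γ ^ 2 + 4)
    linear_combination this / 4
  rw [sum_powerset_pow_mul_eq_sum_powerset_pow_mul_one_sub_pow]
  refine sum_congr rfl fun s hs => ?_
  rw [sum_powerset_prod_aeval_isingF hρ (by positivity) s fun e he =>
    G.not_isDiag_of_mem_edgeSet (G.mem_edgeFinset.1 (mem_powerset.1 hs he))]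

theorem theta_component_expansion {V : Type*} [Fintype V] [DecidableEq V]
    (G : SimpleGraph V) [DecidableRel G.Adj] (β γ : ℝ) :
    ∑ s ∈ G.edgeFinset.powerset,
        β ^ s.card * ∏ i : V, Polynomial.aeval γ (isingF (degIn s i))
      = ∑ s ∈ G.edgeFinset.powerset,
          β ^ s.card * (1 - β) ^ (G.edgeFinset.card - s.card) *
            ∏ᶠ K : (subSpan s).ConnectedComponent,
              ∑ k ∈ Finset.range (compNullity s K + 1),
                ((compNullity s K).choose k : ℝ) * Polynomial.aeval γ (isingF (2 * k)) :=
  theta_component_expansion_general G β γ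
end

section
/- Let G = (V,E) be a finite simple graph and let d_i denote the degree of vertex i in G. Then in ℤ[β]: (1-β)^{|V|} · Σ_{s ⊆ E} (-β)^{|s|} · Π_{i ∈ V} (1 - deg_s(i)) = (1-β)^{|E|} · Σ_{M} (-β)^{|M|} · Π_{i ∈ V, i not covered by M} (1 + (d_i - 1)·β), where the second sum runs over all matchings M of G. -/
open Polynomial

attribute [local instance] Classical.propDecidable

/-- A set of edges is a matching if no two distinct edges of it share a vertex. -/
def IsMatchingSet {W : Type*} (M : Finset (Sym2 W)) : Prop :=
  ∀ e ∈ M, ∀ e' ∈ M, e ≠ e' → ∀ v : W, ¬(v ∈ e ∧ v ∈ e')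

/-!
Expand `∏ᵢ (1 - deg_s i)` by letting every vertex either choose nothing or choose, with sign `-1`,
one of its edges in `s`. Summing over `s` first, each edge then contributes a weight depending only
on how many of its two endpoints chose it. Expanding `∏ (1 + (dᵢ - 1)β) = ∏ ((1 - β) + dᵢβ)` over
the uncovered vertices in the same way, a matching `M` together with such choices amounts to a
choice function `φ` together with a set `M` of edges chosen by both of their endpoints. Both sides
thus become `∑_φ (1 - β) ^ #{unchosen vertices} ∏_e w(k_e)` with `k_e ≤ 2`, and the two edge
weights `w` agree for `k = 0, 1, 2`.
-/

open Finset

theorem Finset.sum_powerset_filter_superset_pow {α R : Type*} [DecidableEq α] [CommSemiring R]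
    {u E : Finset α} (hu : u ⊆ E) (y : R) :
    ∑ s ∈ E.powerset with u ⊆ s, y ^ #s = ∏ e ∈ E, if e ∈ u then y else y + 1 := by
  calc ∑ s ∈ E.powerset with u ⊆ s, y ^ #s
      = ∑ s ∈ E.powerset, (∏ _e ∈ s, y) * ∏ e ∈ E \ s, if e ∉ u then 1 else 0 := by
        rw [sum_filter]
        refine sum_congr rfl fun s hs => ?_
        have : u ⊆ s ↔ ∀ e ∈ E \ s, e ∉ u := by
          refine ⟨fun h e he heu => (mem_sdiff.1 he).2 (h heu), fun h e heu => ?_⟩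
          by_contra hes
          exact h e (mem_sdiff.2 ⟨hu heu, hes⟩) heu
        rw [prod_boole, prod_const, mul_boole]
        exact if_congr this rfl rfl
    _ = ∏ e ∈ E, if e ∈ u then y else y + 1 := by
        rw [← prod_add]
        exact prod_congr rfl fun e _ => by split_ifs <;> simp

namespace MonomerDimer

lemma isMatchingSet_of_forall_eq_some {V : Type*} {φ : V → Option (Sym2 V)} {M : Finset (Sym2 V)}
    (hM : ∀ e ∈ M, ∀ v ∈ e, φ v = some e) : IsMatchingSet M := fun e he e' he' hne v ⟨hv, hv'⟩ =>
  hne (Option.some_injective _ ((hM e he v hv).symm.trans (hM e' he' v hv')))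

variable {V R : Type*} [Fintype V] [DecidableEq V] [CommRing R]

def edgeChoices (E : Finset (Sym2 V)) : Finset (V → Option (Sym2 V)) :=
  Fintype.piFinset fun v => insertNone {e ∈ E | v ∈ e}

def choosers (φ : V → Option (Sym2 V)) (e : Sym2 V) : Finset V := {v | φ v = some e}

variable {E : Finset (Sym2 V)} {φ : V → Option (Sym2 V)}

lemma mem_edgeChoices : φ ∈ edgeChoices E ↔ ∀ v e, φ v = some e → e ∈ E ∧ v ∈ e := by
  simp only [edgeChoices, Fintype.mem_piFinset]
  refine forall_congr' fun v => ?_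
  cases φ v <;> simp

lemma choosers_subset_toFinset (hφ : φ ∈ edgeChoices E) (e : Sym2 V) :
    choosers φ e ⊆ e.toFinset := fun v hv =>
  Sym2.mem_toFinset.2 (mem_edgeChoices.1 hφ v e (mem_filter.1 hv).2).2

lemma card_choosers_le_two (hφ : φ ∈ edgeChoices E) (e : Sym2 V) : #(choosers φ e) ≤ 2 :=
  (card_le_card (choosers_subset_toFinset hφ e)).trans (by
    rw [Sym2.card_toFinset]; split_ifs <;> omega)

lemma card_choosers_eq_two_iff (hφ : φ ∈ edgeChoices E) {e : Sym2 V} (he : ¬e.IsDiag) :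
    #(choosers φ e) = 2 ↔ ∀ v ∈ e, φ v = some e := by
  rw [← Sym2.card_toFinset_of_not_isDiag e he]
  constructor
  · intro h v hv
    have hv' : v ∈ choosers φ e :=
      eq_of_subset_of_card_le (choosers_subset_toFinset hφ e) h.ge ▸ Sym2.mem_toFinset.2 hv
    simpa [choosers] using hv'
  · intro h
    refine congrArg card (Subset.antisymm (choosers_subset_toFinset hφ e) fun v hv => ?_)
    simpa [choosers] using h v (Sym2.mem_toFinset.1 hv)

lemma prod_univ_eq_prod_none_mul_prod_choosers {β : Type*} [CommMonoid β] (hφ : φ ∈ edgeChoices E)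
    (f : V → β) :
    ∏ v, f v = (∏ v with φ v = none, f v) * ∏ e ∈ E, ∏ v ∈ choosers φ e, f v := by
  rw [← prod_fiberwise_of_maps_to (t := insertNone E) (g := φ), prod_insertNone]
  · rfl
  · intro v _
    cases h : φ v with
    | none => simp
    | some e => simpa using (mem_edgeChoices.1 hφ v e h).1

lemma prod_one_sub_degIn (s : Finset (Sym2 V)) :
    ∏ v, (1 - (degIn s v : R)) = ∑ φ ∈ edgeChoices s, ∏ v, if φ v = none then 1 else -1 := by
  rw [edgeChoices, ← prod_univ_sum _ fun _ o => if o = none then (1 : R) else -1]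
  refine prod_congr rfl fun v _ => ?_
  simp only [sum_insertNone, reduceCtorEq, if_true, if_false, sum_const, degIn]
  simp only [nsmul_eq_mul, mul_neg, mul_one, sub_eq_add_neg]
  -- the two filters differ only in their decidability instances
  congr!

lemma mem_edgeChoices_iff_of_subset {s : Finset (Sym2 V)} (hs : s ⊆ E) :
    φ ∈ edgeChoices s ↔ φ ∈ edgeChoices E ∧ {e ∈ E | (choosers φ e).Nonempty} ⊆ s := by
  simp only [mem_edgeChoices, subset_iff, mem_filter, choosers, filter_nonempty_iff, mem_univ,
    true_and]
  constructor
  · intro h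
    exact ⟨fun v e hv => ⟨hs (h v e hv).1, (h v e hv).2⟩, fun e ⟨_, v, hv⟩ => (h v e hv).1⟩
  · rintro ⟨h, hsub⟩ v e hv
    exact ⟨hsub ⟨(h v e hv).1, v, hv⟩, (h v e hv).2⟩

lemma sum_powerset_pow_mul_prod_one_sub_degIn (y : R) :
    ∑ s ∈ E.powerset, y ^ #s * ∏ v, (1 - (degIn s v : R))
      = ∑ φ ∈ edgeChoices E, (∏ v, if φ v = none then 1 else -1) *
          ∏ e ∈ E, if (choosers φ e).Nonempty then y else y + 1 := by
  calc ∑ s ∈ E.powerset, y ^ #s * ∏ v, (1 - (degIn s v : R))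
      = ∑ s ∈ E.powerset, ∑ φ ∈ edgeChoices E,
          if {e ∈ E | (choosers φ e).Nonempty} ⊆ s then
            y ^ #s * ∏ v, (if φ v = none then 1 else -1 : R) else 0 := by
        refine sum_congr rfl fun s hs => ?_
        rw [prod_one_sub_degIn, mul_sum, ← sum_filter]
        refine sum_congr (ext fun φ => ?_) fun _ _ => rfl
        rw [mem_filter, mem_edgeChoices_iff_of_subset (mem_powerset.1 hs)]
    _ = ∑ φ ∈ edgeChoices E, (∏ v, if φ v = none then 1 else -1) *
          ∑ s ∈ E.powerset with {e ∈ E | (choosers φ e).Nonempty} ⊆ s, y ^ #s := by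
        rw [sum_comm]
        refine sum_congr rfl fun φ _ => ?_
        rw [sum_filter, mul_sum]
        exact sum_congr rfl fun s _ => by split_ifs <;> simp [mul_comm]
    _ = _ := by
        refine sum_congr rfl fun φ _ => ?_
        rw [sum_powerset_filter_superset_pow (filter_subset _ _)]
        exact congrArg _ (prod_congr rfl fun e he => by simp [he])

/-- `(x - 1) ^ k` is a sign `-1` and a factor `1 - x` for each of the `k` endpoints choosing the
edge; the second factor is the sum of `(-x) ^ [e ∈ s]` over the `s` compatible with the choices. -/
def edgeWeight (x : R) (k : ℕ) : R := (x - 1) ^ k * if k = 0 then 1 - x else -x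

def choiceSum (x : R) (E : Finset (Sym2 V)) : R :=
  ∑ φ ∈ edgeChoices E, (1 - x) ^ #{v | φ v = none} * ∏ e ∈ E, edgeWeight x #(choosers φ e)

lemma one_sub_pow_card_mul_prod_sign (hφ : φ ∈ edgeChoices E) (x : R) :
    (1 - x) ^ Fintype.card V * ∏ v, (if φ v = none then 1 else -1)
      = (1 - x) ^ #{v | φ v = none} * ∏ e ∈ E, (x - 1) ^ #(choosers φ e) := by
  rw [← card_univ, ← prod_const, ← prod_mul_distrib, prod_univ_eq_prod_none_mul_prod_choosers hφ]
  congr 1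
  · rw [← prod_const]
    exact prod_congr rfl fun v hv => by simp [(mem_filter.1 hv).2]
  · refine prod_congr rfl fun e _ => ?_
    rw [← prod_const]
    exact prod_congr rfl fun v hv => by simp [(mem_filter.1 hv).2]

theorem one_sub_pow_mul_sum_powerset_eq_choiceSum (x : R) :
    (1 - x) ^ Fintype.card V * ∑ s ∈ E.powerset, (-x) ^ #s * ∏ v, (1 - (degIn s v : R))
      = choiceSum x E := by
  rw [sum_powerset_pow_mul_prod_one_sub_degIn, mul_sum, choiceSum]
  refine sum_congr rfl fun φ hφ => ?_
  rw [← mul_assoc, one_sub_pow_card_mul_prod_sign hφ, mul_assoc, ← prod_mul_distrib]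
  refine congrArg _ (prod_congr rfl fun e _ => ?_)
  simp only [edgeWeight, ← card_pos, Nat.pos_iff_ne_zero, ne_eq, ite_not]
  split_ifs <;> ring

/-- A vertex covered by `M` must choose its edge of `M`; an uncovered one is weighted as in
`(1 - x) + d x`. -/
def vertexWeight (x : R) (M : Finset (Sym2 V)) (v : V) (o : Option (Sym2 V)) : R :=
  if ∃ e ∈ M, v ∈ e then (if ∃ e ∈ M, o = some e then 1 else 0) else if o = none then 1 - x else x

lemma prod_uncovered_eq_sum_prod_vertexWeight {M : Finset (Sym2 V)} (hM : IsMatchingSet M)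
    (hME : M ⊆ E) (x : R) :
    ∏ v with ¬∃ e ∈ M, v ∈ e, (1 + ((#{e ∈ E | v ∈ e} : R) - 1) * x)
      = ∑ φ ∈ edgeChoices E, ∏ v, vertexWeight x M v (φ v) := by
  rw [edgeChoices, ← prod_univ_sum, prod_filter]
  refine prod_congr rfl fun v _ => ?_
  unfold vertexWeight
  split_ifs with hv
  · obtain ⟨e, he, hve⟩ := hv
    have : {e' ∈ {e ∈ E | v ∈ e} | e' ∈ M} = {e} := by
      ext e'
      simp only [mem_filter, mem_singleton]
      refine ⟨fun ⟨⟨_, hve'⟩, he'⟩ => ?_, fun h => h ▸ ⟨⟨hME he, hve⟩, he⟩⟩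
      by_contra hne
      exact hM e' he' e he hne v ⟨hve', hve⟩
    rw [sum_insertNone, if_neg (by simp), zero_add]
    simp only [Option.some_inj, exists_eq_right']
    rw [← sum_filter, this, sum_singleton]
  · simp only [sum_insertNone, if_true, reduceCtorEq, if_false, sum_const, nsmul_eq_mul]
    ring

lemma prod_vertexWeight_of_forall_eq_some {M : Finset (Sym2 V)} (hφ : φ ∈ edgeChoices E)
    (hfull : ∀ e ∈ M, ∀ v ∈ e, φ v = some e) (x : R) :
    ∏ v, vertexWeight x M v (φ v)
      = (1 - x) ^ #{v | φ v = none} * ∏ e ∈ E \ M, x ^ #(choosers φ e) := by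
  have hcov : ∀ v e, φ v = some e → ((∃ e' ∈ M, v ∈ e') ↔ e ∈ M) := by
    refine fun v e hv =>
      ⟨fun ⟨e', he', hve'⟩ => ?_, fun he => ⟨e, he, (mem_edgeChoices.1 hφ v e hv).2⟩⟩
    rw [hfull e' he' v hve'] at hv
    exact Option.some_injective _ hv ▸ he'
  rw [prod_univ_eq_prod_none_mul_prod_choosers hφ]
  congr 1
  · rw [← prod_const]
    refine prod_congr rfl fun v hv => ?_
    have hv : φ v = none := (mem_filter.1 hv).2
    have : ¬∃ e ∈ M, v ∈ e := fun ⟨e, he, hve⟩ => by simp [hfull e he v hve] at hv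
    simp [vertexWeight, this, hv]
  · rw [← filter_notMem_eq_sdiff, prod_filter]
    refine prod_congr rfl fun e _ => ?_
    split_ifs with he
    · exact prod_eq_one fun v hv => by
        simp [vertexWeight, (hcov v e (mem_filter.1 hv).2).2 he, (mem_filter.1 hv).2, he]
    · rw [← prod_const]
      exact prod_congr rfl fun v hv => by
        simp [vertexWeight, (mem_filter.1 hv).2, (hcov v e (mem_filter.1 hv).2).not.2 he]

lemma prod_vertexWeight_eq_zero_of_not_forall {M : Finset (Sym2 V)} (hφ : φ ∈ edgeChoices E)
    (hM : IsMatchingSet M) (hfull : ¬∀ e ∈ M, ∀ v ∈ e, φ v = some e) (x : R) :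
    ∏ v, vertexWeight x M v (φ v) = 0 := by
  simp only [not_forall] at hfull
  obtain ⟨e, he, v, hve, hv⟩ := hfull
  refine prod_eq_zero (mem_univ v) ?_
  have : ¬∃ e' ∈ M, φ v = some e' := by
    rintro ⟨e', he', hv'⟩
    have hne : e' ≠ e := fun h => hv (h ▸ hv')
    exact hM e' he' e he hne v ⟨(mem_edgeChoices.1 hφ v e' hv').2, hve⟩
  rw [vertexWeight, if_pos ⟨e, he, hve⟩, if_neg this]

lemma edgeWeight_eq_of_le_two {k : ℕ} (hk : k ≤ 2) (x : R) :
    edgeWeight x k = (1 - x) * ((if k = 2 then -x else 0) + x ^ k) := by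
  interval_cases k <;> simp [edgeWeight] <;> ring

lemma one_sub_pow_mul_sum_matchings_prod_vertexWeight (hE : ∀ e ∈ E, ¬e.IsDiag)
    (hφ : φ ∈ edgeChoices E) (x : R) :
    (1 - x) ^ #E * ∑ M ∈ E.powerset with IsMatchingSet M, (-x) ^ #M * ∏ v, vertexWeight x M v (φ v)
      = (1 - x) ^ #{v | φ v = none} * ∏ e ∈ E, edgeWeight x #(choosers φ e) := by
  calc (1 - x) ^ #E * ∑ M ∈ E.powerset with IsMatchingSet M,
          (-x) ^ #M * ∏ v, vertexWeight x M v (φ v)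
      = (1 - x) ^ #E * ∑ M ∈ E.powerset, (∏ e ∈ M, if ∀ v ∈ e, φ v = some e then -x else 0) *
          ((1 - x) ^ #{v | φ v = none} * ∏ e ∈ E \ M, x ^ #(choosers φ e)) := by
        rw [sum_filter]
        refine congrArg _ (sum_congr rfl fun M _ => ?_)
        rw [prod_ite_zero, prod_const]
        by_cases hfull : ∀ e ∈ M, ∀ v ∈ e, φ v = some e
        · rw [if_pos (isMatchingSet_of_forall_eq_some hfull), if_pos hfull,
            prod_vertexWeight_of_forall_eq_some hφ hfull]
        · rw [if_neg hfull, zero_mul]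
          split_ifs with hM
          · rw [prod_vertexWeight_eq_zero_of_not_forall hφ hM hfull, mul_zero]
          · rfl
    _ = (1 - x) ^ #{v | φ v = none} *
          ∏ e ∈ E, (1 - x) * ((if ∀ v ∈ e, φ v = some e then -x else 0) + x ^ #(choosers φ e)) := by
        rw [prod_mul_distrib, prod_const, prod_add, mul_sum, mul_sum, mul_sum]
        exact sum_congr rfl fun _ _ => by ring
    _ = (1 - x) ^ #{v | φ v = none} * ∏ e ∈ E, edgeWeight x #(choosers φ e) := by
        refine congrArg _ (prod_congr rfl fun e he => ?_)
        rw [edgeWeight_eq_of_le_two (card_choosers_le_two hφ e),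
          if_congr (card_choosers_eq_two_iff hφ (hE e he)) rfl rfl]

theorem one_sub_pow_mul_sum_matchings_eq_choiceSum (hE : ∀ e ∈ E, ¬e.IsDiag) (x : R) :
    (1 - x) ^ #E * ∑ M ∈ E.powerset with IsMatchingSet M,
        (-x) ^ #M * ∏ v with ¬∃ e ∈ M, v ∈ e, (1 + ((#{e ∈ E | v ∈ e} : R) - 1) * x)
      = choiceSum x E := by
  calc (1 - x) ^ #E * ∑ M ∈ E.powerset with IsMatchingSet M,
          (-x) ^ #M * ∏ v with ¬∃ e ∈ M, v ∈ e, (1 + ((#{e ∈ E | v ∈ e} : R) - 1) * x)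
      = (1 - x) ^ #E * ∑ M ∈ E.powerset with IsMatchingSet M,
          ∑ φ ∈ edgeChoices E, (-x) ^ #M * ∏ v, vertexWeight x M v (φ v) := by
        refine congrArg _ (sum_congr rfl fun M hM => ?_)
        obtain ⟨hME, hM⟩ := mem_filter.1 hM
        rw [prod_uncovered_eq_sum_prod_vertexWeight hM (mem_powerset.1 hME), mul_sum]
    _ = choiceSum x E := by
        rw [sum_comm, mul_sum, choiceSum]
        exact sum_congr rfl fun φ hφ => one_sub_pow_mul_sum_matchings_prod_vertexWeight hE hφ x

end MonomerDimer

open MonomerDimer in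
theorem omega_eq_monomer_dimer {V : Type*} [Fintype V] [DecidableEq V]
    (G : SimpleGraph V) [DecidableRel G.Adj] :
    (1 - X : Polynomial ℤ) ^ (Fintype.card V) *
        ∑ s ∈ G.edgeFinset.powerset,
          (-X : Polynomial ℤ) ^ s.card * ∏ i : V, (1 - (degIn s i : Polynomial ℤ))
      = (1 - X : Polynomial ℤ) ^ (G.edgeFinset.card) *
          ∑ M ∈ G.edgeFinset.powerset.filter (fun M => IsMatchingSet M),
            (-X : Polynomial ℤ) ^ M.card *
              ∏ i ∈ Finset.univ.filter (fun i : V => ¬∃ e ∈ M, i ∈ e),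
                (1 + ((G.degree i : Polynomial ℤ) - 1) * X) := by
  have hdeg : ∀ i, G.degree i = #{e ∈ G.edgeFinset | i ∈ e} := fun i => by
    rw [← G.card_incidenceFinset_eq_degree, G.incidenceFinset_eq_filter]
  simp only [hdeg]
  rw [one_sub_pow_mul_sum_powerset_eq_choiceSum,
    one_sub_pow_mul_sum_matchings_eq_choiceSum fun e he => G.not_isDiag_of_mem_edgeFinset he]
end
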